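/- arXiv:math/0701381 — 3 statements merged into one kernel-verified Lean document; each statement's English description precedes it below -/
import Mathlib

section
/- For any configuration u of the abelian sandpile model on a finite connected undirected multigraph with sink, there exists a unique stable configuration σ(u), the stabilization of u, such that σ(u) = τ_{i_1} τ_{i_2} ⋯ τ_{i_m}(u) for some finite sequence of topplings τ_{i_1}, …, τ_{i_m} of unstable vertices; in particular every maximal sequence of topplings starting from u terminates, and all such sequences terminate at the same stable configuration. -/
namespace SandpilePaper

variable {V : Type*} [Fintype V] [DecidableEq V]

/-- Configurations: assignments of numbers of grains to ordinary (non-sink) vertices. -/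
abbrev Conf (s : V) : Type _ := {i : V // i ≠ s} → ℕ

/-- The degree of a vertex: `deg i = ∑ j, e i j`. -/
def deg (e : V → V → ℕ) (i : V) : ℕ := ∑ j, e i j

/-- Toppling the (unstable) vertex `i`. -/
def toppleAt (e : V → V → ℕ) (s : V) (i : {i : V // i ≠ s}) (u : Conf s) : Conf s :=
  fun j => if j = i then u i - deg e i.1 + e i.1 i.1 else u j + e i.1 j.1

/-- One toppling step: some unstable vertex topples. -/
def Topple (e : V → V → ℕ) (s : V) (u v : Conf s) : Prop :=
  ∃ i : {i : V // i ≠ s}, deg e i.1 ≤ u i ∧ v = toppleAt e s i u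

/-- A configuration is stable if every ordinary vertex has fewer grains than its degree. -/
def Stable (e : V → V → ℕ) (s : V) (u : Conf s) : Prop :=
  ∀ j : {i : V // i ≠ s}, u j < deg e j.1

/-- The underlying simple graph: edges between distinct vertices with positive multiplicity. -/
def graph (e : V → V → ℕ) : SimpleGraph V := SimpleGraph.fromRel fun i j => 0 < e i j

/-- `σ` is a stabilization map: `σ u` is stable and reached from `u` by finitely many topplings. -/
def IsStabilization (e : V → V → ℕ) (s : V) (σ : Conf s → Conf s) : Prop :=
  ∀ u, Stable e s (σ u) ∧ Relation.ReflTransGen (Topple e s) u (σ u)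

/-- A stable configuration `u` is recurrent if every configuration can reach it. -/
def Recurrent (e : V → V → ℕ) (s : V) (σ : Conf s → Conf s) (u : Conf s) : Prop :=
  Stable e s u ∧ ∀ v : Conf s, ∃ w : Conf s, σ (v + w) = u

/-- Apply a sequence of topplings. -/
def applySeq (e : V → V → ℕ) (s : V) (u : Conf s) : List {i : V // i ≠ s} → Conf s
  | [] => u
  | i :: L => applySeq e s (toppleAt e s i u) L

/-- A toppling sequence is valid if each toppled vertex is unstable when toppled. -/
def ValidSeq (e : V → V → ℕ) (s : V) (u : Conf s) : List {i : V // i ≠ s} → Prop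
  | [] => True
  | i :: L => deg e i.1 ≤ u i ∧ ValidSeq e s (toppleAt e s i u) L

/-- `succeq e s i j` means `i ⪰ j`: `j` lies on the unique path from `i` to the sink `s`. -/
def succeq (e : V → V → ℕ) (s i j : V) : Prop :=
  (graph e).dist i s = (graph e).dist i j + (graph e).dist j s

noncomputable instance (e : V → V → ℕ) (s i j : V) : Decidable (succeq e s i j) := Nat.decEq _ _

/-- `p` assigns to each ordinary vertex its parent: its neighbor on the path to the sink. -/
def IsParent (e : V → V → ℕ) (s : V) (p : {i : V // i ≠ s} → V) : Prop :=
  ∀ j : {i : V // i ≠ s}, (graph e).Adj j.1 (p j) ∧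
    (graph e).dist (p j) s + 1 = (graph e).dist j.1 s

/-- The set `{i : i ⪰ j}`. -/
noncomputable def descendants (e : V → V → ℕ) (s : V) (j : {i : V // i ≠ s}) :
    Finset {i : V // i ≠ s} :=
  Finset.univ.filter fun i => succeq e s i.1 j.1

/-- The set `{i : i ≻ j}`. -/
noncomputable def strictDescendants (e : V → V → ℕ) (s : V) (j : {i : V // i ≠ s}) :
    Finset {i : V // i ≠ s} :=
  Finset.univ.filter fun i => i ≠ j ∧ succeq e s i.1 j.1

/-- `j` is a leaf: its parent is its only neighbor in the underlying tree. -/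
def IsLeaf (e : V → V → ℕ) (s : V) (p : {i : V // i ≠ s} → V) (j : {i : V // i ≠ s}) : Prop :=
  ∀ k : V, (graph e).Adj j.1 k → k = p j

/-- Rows of the toppling matrix `Δ`. -/
def deltaRow (e : V → V → ℕ) (s : V) (i j : {i : V // i ≠ s}) : ℤ :=
  if i = j then (deg e i.1 : ℤ) - (e i.1 i.1 : ℤ) else -(e i.1 j.1 : ℤ)

/-- The lattice `Λ` spanned by the rows of the toppling matrix. -/
def lattice (e : V → V → ℕ) (s : V) : AddSubgroup ({i : V // i ≠ s} → ℤ) :=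
  AddSubgroup.closure (Set.range (deltaRow e s))

/-- The map `φ(u)_j = ∑_{i ⪰ j} u_i (mod e_{j,p(j)})`. -/
noncomputable def phi (e : V → V → ℕ) (s : V) (p : {i : V // i ≠ s} → V) (u : Conf s)
    (j : {i : V // i ≠ s}) : ZMod (e j.1 (p j)) :=
  ∑ i ∈ descendants e s j, (u i : ZMod (e j.1 (p j)))

/-- The map `φ` on integer vectors. -/
noncomputable def phiZ (e : V → V → ℕ) (s : V) (p : {i : V // i ≠ s} → V) (u : {i : V // i ≠ s} → ℤ)
    (j : {i : V // i ≠ s}) : ZMod (e j.1 (p j)) :=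
  ∑ i ∈ descendants e s j, (u i : ZMod (e j.1 (p j)))


-- measure
noncomputable def Eb (e : V → V → ℕ) : ℕ := Finset.univ.sup (deg e) + 1
noncomputable def Db (e : V → V → ℕ) (s : V) : ℕ := Finset.univ.sup fun v => (graph e).dist v s
noncomputable def wt (e : V → V → ℕ) (s : V) (v : V) : ℕ :=
  ∑ k ∈ Finset.range ((graph e).dist v s), (Eb e)^(Db e s - k)
noncomputable def meas (e : V → V → ℕ) (s : V) (u : Conf s) : ℕ :=
  ∑ j : {i : V // i ≠ s}, u j * wt e s j.1

lemma wt_s (e : V → V → ℕ) (s : V) : wt e s s = 0 := by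
  simp [wt, SimpleGraph.dist_self]

lemma wt_mono (e : V → V → ℕ) (s : V) {a b : V}
    (h : (graph e).dist a s ≤ (graph e).dist b s) : wt e s a ≤ wt e s b :=
  Finset.sum_le_sum_of_subset (Finset.range_subset_range.2 h)

lemma key_sum_lt (e : V → V → ℕ) (s : V) (hsym : ∀ i j : V, e i j = e j i)
    (hconn : (graph e).Connected) (i : V) (hi : i ≠ s) :
    ∑ j : V, e i j * wt e s j < deg e i * wt e s i := by
  classical
  set G := graph e with hG
  -- find neighbor toward sink
  obtain ⟨p, hp⟩ := hconn.exists_walk_length_eq_dist i s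
  cases p with
  | nil => exact absurd rfl hi
  | @cons _ j0 _ hadj q =>
    have hdj0 : G.dist j0 s + 1 = G.dist i s := by
      have h1 : G.dist j0 s ≤ q.length := SimpleGraph.dist_le q
      obtain ⟨q', hq'⟩ := hconn.exists_walk_length_eq_dist j0 s
      have h2 : G.dist i s ≤ q'.length + 1 := by
        simpa using SimpleGraph.dist_le (SimpleGraph.Walk.cons hadj q')
      simp [SimpleGraph.Walk.length_cons] at hp
      omega
    have he0 : 0 < e i j0 := by
      have hadj' := (SimpleGraph.fromRel_adj _ _ _).mp hadj
      rcases hadj'.2 with h | h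
      · exact h
      · rw [hsym]; exact h
    have hij0 : i ≠ j0 := by
      exact ((SimpleGraph.fromRel_adj _ _ _).mp hadj).1
    have hdiD : G.dist i s ≤ Db e s := Finset.le_sup (f := fun v => (graph e).dist v s) (Finset.mem_univ i)
    set E := Eb e with hE
    set x : ℕ := E ^ (Db e s - G.dist i s) with hx
    have hx1 : 1 ≤ x := Nat.one_le_pow _ _ (by simp [hE, Eb])
    -- wt i = wt j0 + E * x
    have hwt_i : wt e s i = wt e s j0 + E * x := by
      have : wt e s i = wt e s j0 + E ^ (Db e s - G.dist j0 s) := by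
        rw [wt, wt, ← hdj0, Finset.sum_range_succ]
      rw [this, hx]
      have : Db e s - G.dist j0 s = (Db e s - G.dist i s) + 1 := by omega
      rw [this, pow_succ, mul_comm]
    -- each neighbor j (with e i j > 0) has wt j ≤ wt i + x
    have hnb : ∀ j : V, 0 < e i j → wt e s j ≤ wt e s i + x := by
      intro j hj
      by_cases hji : j = i
      · subst hji; omega
      · have hadj2 : G.Adj i j :=
          (SimpleGraph.fromRel_adj _ _ _).mpr ⟨fun h => hji h.symm, Or.inl hj⟩
        obtain ⟨q', hq'⟩ := hconn.exists_walk_length_eq_dist i s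
        have h2 : G.dist j s ≤ G.dist i s + 1 := by
          have := SimpleGraph.dist_le (SimpleGraph.Walk.cons hadj2.symm q')
          simpa [hq'] using this
        have h3 : wt e s j ≤ ∑ k ∈ Finset.range (G.dist i s + 1), E ^ (Db e s - k) :=
          Finset.sum_le_sum_of_subset (Finset.range_subset_range.2 h2)
        rw [Finset.sum_range_succ] at h3
        exact h3
    -- bound degree
    have hdegE : deg e i ≤ E - 1 := by
      have := Finset.le_sup (f := deg e) (Finset.mem_univ i)
      simp [hE, Eb]; omega
    -- now compute
    have hsplit : ∑ j : V, e i j * wt e s j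
        = e i j0 * wt e s j0 + ∑ j ∈ Finset.univ.erase j0, e i j * wt e s j :=
      (Finset.add_sum_erase _ _ (Finset.mem_univ j0)).symm
    have hdeg : deg e i = e i j0 + ∑ j ∈ Finset.univ.erase j0, e i j := by
      rw [deg]; exact (Finset.add_sum_erase _ _ (Finset.mem_univ j0)).symm
    have hbound : ∑ j ∈ Finset.univ.erase j0, e i j * wt e s j
        ≤ ∑ j ∈ Finset.univ.erase j0, e i j * (wt e s i + x) := by
      apply Finset.sum_le_sum
      intro j _
      by_cases hj : 0 < e i j
      · exact Nat.mul_le_mul_left _ (hnb j hj)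
      · simp [Nat.eq_zero_of_not_pos hj]
    rw [hsplit]
    have hsum_mul : ∑ j ∈ Finset.univ.erase j0, e i j * (wt e s i + x)
        = (∑ j ∈ Finset.univ.erase j0, e i j) * (wt e s i + x) := by
      rw [Finset.sum_mul]
    set R := ∑ j ∈ Finset.univ.erase j0, e i j with hR
    have hRE : e i j0 + R ≤ E - 1 := by omega
    rw [hsum_mul] at hbound
    -- final arithmetic
    have hEx : 1 ≤ E := by simp [hE, Eb]
    have h1 : R * x < e i j0 * (E * x) := by
      have hRx : R * x ≤ (E - 1) * x := Nat.mul_le_mul_right _ (by omega)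
      have hEx' : (E - 1) * x + x = E * x := by
        rw [Nat.sub_one_mul]
        have hxE : x ≤ E * x := Nat.le_mul_of_pos_left x (by omega)
        omega
      have h2 : E * x ≤ e i j0 * (E * x) := Nat.le_mul_of_pos_left _ he0
      omega
    rw [hwt_i] at hbound ⊢
    rw [hdeg]
    nlinarith [h1, hbound]


lemma meas_topple_lt (e : V → V → ℕ) (s : V) (hsym : ∀ i j : V, e i j = e j i)
    (hconn : (graph e).Connected) (i : {i : V // i ≠ s}) (u : Conf s)
    (h : deg e i.1 ≤ u i) : meas e s (toppleAt e s i u) < meas e s u := by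
  classical
  -- relate full-vertex sum to subtype sum
  have hsub : ∀ g : V → ℕ, (∑ j ∈ Finset.univ.erase s, g j) = ∑ j : {x : V // x ≠ s}, g j.1 :=
    fun g => Finset.sum_subtype _ (by simp) g
  set S0 : ℕ := ∑ j : {x : V // x ≠ s}, e i.1 j.1 * wt e s j.1 with hS0
  have hSV : (∑ j : V, e i.1 j * wt e s j) = S0 := by
    rw [← Finset.add_sum_erase _ _ (Finset.mem_univ s), wt_s, mul_zero, zero_add, hsub]
  have hkey : S0 < deg e i.1 * wt e s i.1 := by
    rw [← hSV]; exact key_sum_lt e s hsym hconn i.1 i.2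
  -- expand the three subtype sums at i
  have e1 : meas e s u = u i * wt e s i.1 + ∑ j ∈ Finset.univ.erase i, u j * wt e s j.1 :=
    (Finset.add_sum_erase _ _ (Finset.mem_univ i)).symm
  have e3 : S0 = e i.1 i.1 * wt e s i.1 + ∑ j ∈ Finset.univ.erase i, e i.1 j.1 * wt e s j.1 :=
    (Finset.add_sum_erase _ _ (Finset.mem_univ i)).symm
  have e2 : meas e s (toppleAt e s i u)
      = (u i - deg e i.1 + e i.1 i.1) * wt e s i.1
        + ∑ j ∈ Finset.univ.erase i, (u j + e i.1 j.1) * wt e s j.1 := by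
    rw [meas, ← Finset.add_sum_erase _ _ (Finset.mem_univ i)]
    congr 1
    · simp [toppleAt]
    · apply Finset.sum_congr rfl
      intro j hj
      have : j ≠ i := (Finset.mem_erase.mp hj).1
      simp [toppleAt, this]
  have e4 : ∑ j ∈ Finset.univ.erase i, (u j + e i.1 j.1) * wt e s j.1
      = (∑ j ∈ Finset.univ.erase i, u j * wt e s j.1)
        + ∑ j ∈ Finset.univ.erase i, e i.1 j.1 * wt e s j.1 := by
    rw [← Finset.sum_add_distrib]
    exact Finset.sum_congr rfl fun j _ => Nat.add_mul _ _ _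
  have e5 : (u i - deg e i.1 + e i.1 i.1) * wt e s i.1 + deg e i.1 * wt e s i.1
      = u i * wt e s i.1 + e i.1 i.1 * wt e s i.1 := by
    rw [← Nat.add_mul, ← Nat.add_mul]
    congr 1
    omega
  omega

lemma topple_meas_lt (e : V → V → ℕ) (s : V) (hsym : ∀ i j : V, e i j = e j i)
    (hconn : (graph e).Connected) {u v : Conf s} (h : Topple e s u v) :
    meas e s v < meas e s u := by
  obtain ⟨i, hi, rfl⟩ := h
  exact meas_topple_lt e s hsym hconn i u hi

lemma exists_stable_aux (e : V → V → ℕ) (s : V) (hsym : ∀ i j : V, e i j = e j i)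
    (hconn : (graph e).Connected) :
    ∀ n (u : Conf s), meas e s u ≤ n →
      ∃ v, Stable e s v ∧ Relation.ReflTransGen (Topple e s) u v := by
  intro n
  induction n with
  | zero =>
    intro u hu
    by_cases hst : Stable e s u
    · exact ⟨u, hst, .refl⟩
    · obtain ⟨j, hj⟩ := not_forall.mp hst
      have hj' : deg e j.1 ≤ u j := Nat.le_of_not_lt hj
      have := meas_topple_lt e s hsym hconn j u hj'
      omega
  | succ n ih =>
    intro u hu
    by_cases hst : Stable e s u
    · exact ⟨u, hst, .refl⟩
    · obtain ⟨j, hj⟩ := not_forall.mp hst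
      have hj' : deg e j.1 ≤ u j := Nat.le_of_not_lt hj
      have hlt := meas_topple_lt e s hsym hconn j u hj'
      obtain ⟨v, hv, hr⟩ := ih (toppleAt e s j u) (by omega)
      exact ⟨v, hv, Relation.ReflTransGen.head ⟨j, hj', rfl⟩ hr⟩

lemma topple_comm (e : V → V → ℕ) (s : V) (i j : {i : V // i ≠ s}) (hij : i ≠ j)
    (u : Conf s) (hi : deg e i.1 ≤ u i) (hj : deg e j.1 ≤ u j) :
    toppleAt e s j (toppleAt e s i u) = toppleAt e s i (toppleAt e s j u) := by
  funext k
  simp only [toppleAt]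
  rw [if_neg (show ¬(j = i) from fun h => hij h.symm), if_neg (show ¬(i = j) from hij)]
  split_ifs <;> subst_vars <;> first | omega | simp_all

lemma diamond (e : V → V → ℕ) (s : V) :
    ∀ a b c : Conf s, Topple e s a b → Topple e s a c →
      ∃ d, Relation.ReflGen (Topple e s) b d ∧ Relation.ReflTransGen (Topple e s) c d := by
  rintro a _ _ ⟨i, hi, rfl⟩ ⟨j, hj, rfl⟩
  by_cases hij : i = j
  · subst hij; exact ⟨_, .refl, .refl⟩
  · have hbj : deg e j.1 ≤ (toppleAt e s i a) j := by
      rw [toppleAt, if_neg (fun h => hij h.symm)]; omega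
    have hci : deg e i.1 ≤ (toppleAt e s j a) i := by
      rw [toppleAt, if_neg hij]; omega
    exact ⟨toppleAt e s j (toppleAt e s i a),
      .single ⟨j, hbj, rfl⟩,
      .single ⟨i, hci, topple_comm e s i j hij a hi hj⟩⟩

lemma stable_rtg_eq (e : V → V → ℕ) (s : V) {v w : Conf s} (hv : Stable e s v)
    (h : Relation.ReflTransGen (Topple e s) v w) : w = v := by
  rcases Relation.ReflTransGen.cases_head h with rfl | ⟨c, ⟨i, hi, _⟩, _⟩
  · rfl
  · exact absurd hi (Nat.not_le.mpr (hv i))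


theorem stmt_0 (e : V → V → ℕ) (s : V) (hsym : ∀ i j : V, e i j = e j i)
    (hconn : (graph e).Connected) (u : Conf s) :
    (¬ ∃ f : ℕ → Conf s, f 0 = u ∧ ∀ n, Topple e s (f n) (f (n + 1))) ∧
    (∃! v : Conf s, Stable e s v ∧ Relation.ReflTransGen (Topple e s) u v) := by
  constructor
  · rintro ⟨f, hf0, hf⟩
    have hmono : ∀ n, meas e s (f n) + n ≤ meas e s (f 0) := by
      intro n
      induction n with
      | zero => omega
      | succ n ih => have := topple_meas_lt e s hsym hconn (hf n); omega
    have := hmono (meas e s (f 0) + 1)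
    omega
  · obtain ⟨v, hv, hr⟩ := exists_stable_aux e s hsym hconn (meas e s u) u le_rfl
    refine ⟨v, ⟨hv, hr⟩, ?_⟩
    rintro w ⟨hw, hrw⟩
    obtain ⟨z, h1, h2⟩ := Relation.church_rosser (diamond e s) hrw hr
    rw [← stable_rtg_eq e s hw h1, ← stable_rtg_eq e s hv h2]

end SandpilePaper
end

section
/- The set M of stable configurations of the abelian sandpile model on a finite connected undirected multigraph with sink is a commutative monoid under the operation u ⊕ v := σ(u + v), and the set G ⊆ M of recurrent configurations is an abelian group under ⊕ (the sandpile group). -/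
namespace SandpilePaper

variable {V : Type*} [Fintype V] [DecidableEq V]

section Aux

variable (e : V → V → ℕ) (s : V)

lemma toppleAt_apply_ne (i k : {i : V // i ≠ s}) (u : Conf s) (h : k ≠ i) :
    toppleAt e s i u k = u k + e i.1 k.1 := if_neg h

lemma toppleAt_apply_self (i : {i : V // i ≠ s}) (u : Conf s) :
    toppleAt e s i u i = u i - deg e i.1 + e i.1 i.1 := if_pos rfl

lemma toppleAt_comm (i j : {i : V // i ≠ s}) (u : Conf s) (hij : i ≠ j)
    (hi : deg e i.1 ≤ u i) (hj : deg e j.1 ≤ u j) :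
    toppleAt e s i (toppleAt e s j u) = toppleAt e s j (toppleAt e s i u) := by
  funext k
  by_cases hki : k = i
  · subst hki
    rw [toppleAt_apply_self, toppleAt_apply_ne e s j k u hij,
        toppleAt_apply_ne e s j k _ hij, toppleAt_apply_self]
    omega
  · by_cases hkj : k = j
    · subst hkj
      rw [toppleAt_apply_self, toppleAt_apply_ne e s i k u (Ne.symm hij),
          toppleAt_apply_ne e s i k _ (Ne.symm hij), toppleAt_apply_self]
      omega
    · rw [toppleAt_apply_ne e s i k _ hki, toppleAt_apply_ne e s j k u hkj,
          toppleAt_apply_ne e s j k _ hkj, toppleAt_apply_ne e s i k u hki]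
      omega

lemma toppleAt_add (i : {i : V // i ≠ s}) (u w : Conf s) (hi : deg e i.1 ≤ u i) :
    toppleAt e s i (u + w) = toppleAt e s i u + w := by
  funext k
  by_cases hki : k = i
  · subst hki
    simp only [Pi.add_apply, toppleAt_apply_self]
    omega
  · simp only [Pi.add_apply, toppleAt_apply_ne e s i k _ hki]
    omega

lemma applySeq_append (u : Conf s) (L L' : List {i : V // i ≠ s}) :
    applySeq e s u (L ++ L') = applySeq e s (applySeq e s u L) L' := by
  induction L generalizing u with
  | nil => rfl
  | cons i M ih => simp only [List.cons_append, applySeq]; exact ih _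

lemma validSeq_append (u : Conf s) (L L' : List {i : V // i ≠ s})
    (h1 : ValidSeq e s u L) (h2 : ValidSeq e s (applySeq e s u L) L') :
    ValidSeq e s u (L ++ L') := by
  induction L generalizing u with
  | nil => exact h2
  | cons i M ih => exact ⟨h1.1, ih _ h1.2 h2⟩

lemma rtg_iff_seq (u v : Conf s) :
    Relation.ReflTransGen (Topple e s) u v ↔
      ∃ L, ValidSeq e s u L ∧ applySeq e s u L = v := by
  constructor
  · intro h
    induction h with
    | refl => exact ⟨[], trivial, rfl⟩
    | tail hab hbc ih =>
      obtain ⟨L, hL, hLeq⟩ := ih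
      obtain ⟨i, hi, rfl⟩ := hbc
      refine ⟨L ++ [i], validSeq_append e s u L [i] hL ?_, ?_⟩
      · rw [hLeq]; exact ⟨hi, trivial⟩
      · rw [applySeq_append, hLeq]; rfl
  · rintro ⟨L, hL, rfl⟩
    induction L generalizing u with
    | nil => exact Relation.ReflTransGen.refl
    | cons i M ih =>
      exact Relation.ReflTransGen.head ⟨i, hL.1, rfl⟩ (ih _ hL.2)

lemma le_applySeq_of_notMem (i : {i : V // i ≠ s}) (L : List {i : V // i ≠ s}) (u : Conf s)
    (h : i ∉ L) : u i ≤ applySeq e s u L i := by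
  induction L generalizing u with
  | nil => exact le_refl _
  | cons j M ih =>
    simp only [List.mem_cons, not_or] at h
    refine le_trans ?_ (ih _ h.2)
    rw [toppleAt_apply_ne e s j i u h.1]
    omega

lemma move_front (i : {i : V // i ≠ s}) (L : List {i : V // i ≠ s}) (u : Conf s)
    (hv : ValidSeq e s u L) (hmem : i ∈ L) (hi : deg e i.1 ≤ u i) :
    ∃ L', ValidSeq e s (toppleAt e s i u) L' ∧
      applySeq e s (toppleAt e s i u) L' = applySeq e s u L := by
  induction L generalizing u with
  | nil => cases hmem
  | cons j M ih =>
    by_cases hji : j = i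
    · subst hji
      exact ⟨M, hv.2, rfl⟩
    · have hmem' : i ∈ M := by
        rcases List.mem_cons.mp hmem with h | h
        · exact absurd h.symm hji
        · exact h
      have hi' : deg e i.1 ≤ toppleAt e s j u i := by
        rw [toppleAt_apply_ne e s j i u (fun h => hji h.symm)]
        omega
      obtain ⟨M', hvM', heq⟩ := ih (toppleAt e s j u) hv.2 hmem' hi'
      have hcomm := toppleAt_comm e s i j u (fun h => hji h.symm) hi hv.1
      refine ⟨j :: M', ⟨?_, ?_⟩, ?_⟩
      · rw [toppleAt_apply_ne e s i j u hji]
        exact le_trans hv.1 (Nat.le_add_right _ _)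
      · show ValidSeq e s (toppleAt e s j (toppleAt e s i u)) M'
        rw [← hcomm]
        exact hvM'
      · show applySeq e s (toppleAt e s j (toppleAt e s i u)) M' = _
        rw [← hcomm]
        exact heq

lemma applySeq_unique (L1 : List {i : V // i ≠ s}) :
    ∀ (L2 : List {i : V // i ≠ s}) (u : Conf s), ValidSeq e s u L1 → ValidSeq e s u L2 →
      Stable e s (applySeq e s u L1) → Stable e s (applySeq e s u L2) →
      applySeq e s u L1 = applySeq e s u L2 := by
  induction L1 with
  | nil =>
    intro L2 u _ hv2 hs1 hs2
    cases L2 with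
    | nil => rfl
    | cons j M => exact absurd hv2.1 (not_le.mpr (hs1 j))
  | cons i M1 ih =>
    intro L2 u hv1 hv2 hs1 hs2
    have hmem : i ∈ L2 := by
      by_contra hnm
      have := le_applySeq_of_notMem e s i L2 u hnm
      exact absurd (le_trans hv1.1 this) (not_le.mpr (hs2 i))
    obtain ⟨L2', hvL2', heq⟩ := move_front e s i L2 u hv2 hmem hv1.1
    have := ih L2' (toppleAt e s i u) hv1.2 hvL2' hs1 (heq ▸ hs2)
    calc applySeq e s u (i :: M1) = applySeq e s (toppleAt e s i u) L2' := this
    _ = applySeq e s u L2 := heq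

lemma stabilization_unique (u v w : Conf s)
    (huv : Relation.ReflTransGen (Topple e s) u v) (hv : Stable e s v)
    (huw : Relation.ReflTransGen (Topple e s) u w) (hw : Stable e s w) : v = w := by
  obtain ⟨L1, hv1, he1⟩ := (rtg_iff_seq e s u v).mp huv
  obtain ⟨L2, hv2, he2⟩ := (rtg_iff_seq e s u w).mp huw
  rw [← he1, ← he2]
  exact applySeq_unique e s L1 L2 u hv1 hv2 (he1 ▸ hv) (he2 ▸ hw)

lemma rtg_add (u v w : Conf s) (h : Relation.ReflTransGen (Topple e s) u v) :
    Relation.ReflTransGen (Topple e s) (u + w) (v + w) := by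
  induction h with
  | refl => exact Relation.ReflTransGen.refl
  | tail hab hbc ih =>
    obtain ⟨i, hi, rfl⟩ := hbc
    refine ih.tail ⟨i, ?_, ?_⟩
    · calc deg e i.1 ≤ _ := hi
      _ ≤ _ := Nat.le_add_right _ _
    · exact (toppleAt_add e s i _ w hi).symm

variable (σ : Conf s → Conf s)

lemma sigma_rtg (hσ : IsStabilization e s σ) (u v : Conf s) (h : Relation.ReflTransGen (Topple e s) u v) :
    σ u = σ v :=
  stabilization_unique e s u (σ u) (σ v) (hσ u).2 (hσ u).1
    (h.trans (hσ v).2) (hσ v).1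

lemma sigma_absorb (hσ : IsStabilization e s σ) (a w : Conf s) : σ (σ a + w) = σ (a + w) :=
  (sigma_rtg e s σ hσ (a + w) (σ a + w) (rtg_add e s a (σ a) w (hσ a).2)).symm

lemma sigma_absorb' (hσ : IsStabilization e s σ) (a w : Conf s) : σ (a + σ w) = σ (a + w) := by
  rw [add_comm a (σ w), add_comm a w]
  exact sigma_absorb e s σ hσ w a

lemma sigma_stable_fix (hσ : IsStabilization e s σ) (u : Conf s) (hu : Stable e s u) : σ u = u := by
  rcases (Relation.ReflTransGen.cases_head (hσ u).2) with h | ⟨c, hc, _⟩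
  · exact h.symm
  · obtain ⟨i, hi, _⟩ := hc
    exact absurd hi (not_le.mpr (hu i))

end Aux

/-- The maximal stable configuration. -/
def maxConf (e : V → V → ℕ) (s : V) : Conf s := fun j => deg e j.1 - 1

/-- Iterated powers `a, a⊕a, a⊕a⊕a, …` under `x ⊕ y = σ (x + y)`. -/
noncomputable def powSeq {V : Type*} (s : V) (σ : Conf s → Conf s) (a : Conf s) : ℕ → Conf s
  | 0 => a
  | n + 1 => σ (a + powSeq s σ a n)

theorem stmt_1 (e : V → V → ℕ) (s : V) (hsym : ∀ i j : V, e i j = e j i)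
    (hconn : (graph e).Connected)
    (σ : Conf s → Conf s) (hσ : IsStabilization e s σ) :
    (∀ u v : Conf s, Stable e s u → Stable e s v → Stable e s (σ (u + v))) ∧
    (∀ u v : Conf s, σ (u + v) = σ (v + u)) ∧
    (∀ u v w : Conf s, σ (σ (u + v) + w) = σ (u + σ (v + w))) ∧
    (∀ u : Conf s, Stable e s u → σ (0 + u) = u) ∧
    (∀ u v : Conf s, Recurrent e s σ u → Recurrent e s σ v → Recurrent e s σ (σ (u + v))) ∧
    (∃ eT : Conf s, Recurrent e s σ eT ∧
      (∀ u, Recurrent e s σ u → σ (eT + u) = u) ∧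
      (∀ u, Recurrent e s σ u → ∃ w, Recurrent e s σ w ∧ σ (u + w) = eT)) := by
  classical
  have habs := sigma_absorb e s σ hσ
  have habs' := sigma_absorb' e s σ hσ
  have hdeg : ∀ j : {i : V // i ≠ s}, 0 < deg e j.1 := by
    intro j
    obtain ⟨w⟩ := hconn j.1 s
    have hadj : (graph e).Adj j.1 (w.getVert 1) :=
      w.adj_snd (SimpleGraph.Walk.not_nil_of_ne j.2)
    set b := w.getVert 1
    rw [graph, SimpleGraph.fromRel_adj] at hadj
    have hpos : 0 < e j.1 b := by
      rcases hadj.2 with h | h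
      · exact h
      · rw [hsym]; exact h
    calc 0 < e j.1 b := hpos
      _ ≤ deg e j.1 := Finset.single_le_sum (fun k _ => Nat.zero_le _) (Finset.mem_univ b)
  set m : Conf s := maxConf e s with hm
  -- characterization of recurrence
  have hrecOf : ∀ x : Conf s, Recurrent e s σ (σ (m + x)) := by
    intro x
    refine ⟨(hσ _).1, fun v => ⟨(fun j => (m j - σ v j) + x j), ?_⟩⟩
    have hxx : (σ v + fun j => (m j - σ v j + x j)) = m + x := by
      funext j
      have h1 := (hσ v).1 j
      have h2 : m j = deg e j.1 - 1 := rfl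
      show σ v j + (m j - σ v j + x j) = m j + x j
      omega
    rw [← habs v, hxx]
  -- finiteness of the set of stable configurations
  have hfin : Finite {u : Conf s // Stable e s u} := by
    have hinj : Function.Injective
        (fun (u : {u : Conf s // Stable e s u}) => fun (j : {i : V // i ≠ s}) =>
          (⟨u.1 j, u.2 j⟩ : Fin (deg e j.1))) := by
      intro u v h
      apply Subtype.ext; funext j
      exact congrArg Fin.val (congrFun h j)
    exact Finite.of_injective _ hinj
  set a : Conf s := σ (m + 0) with ha
  set p : ℕ → Conf s := powSeq s σ a with hp
  have hpS : ∀ n, p (n + 1) = σ (a + p n) := fun n => rfl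
  have hpstable : ∀ n, Stable e s (p n) := by
    intro n
    cases n with
    | zero => exact (hσ _).1
    | succ n => rw [hpS]; exact (hσ _).1
  have hprec : ∀ n, ∃ x : Conf s, σ (m + x) = p n := by
    intro n
    induction n with
    | zero => exact ⟨0, rfl⟩
    | succ n ih =>
      obtain ⟨x, hx⟩ := ih
      refine ⟨x + a, ?_⟩
      calc σ (m + (x + a)) = σ (a + (m + x)) := by rw [show m + (x + a) = a + (m + x) by ring]
      _ = σ (a + σ (m + x)) := (habs' _ _).symm
      _ = σ (a + p n) := by rw [hx]
      _ = p (n + 1) := (hpS n).symm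
  obtain ⟨n, k, hk, hper0⟩ : ∃ n k : ℕ, 0 < k ∧ p (n + k) = p n := by
    obtain ⟨n1, n2, hne, h⟩ := Finite.exists_ne_map_eq_of_infinite
      (fun n : ℕ => (⟨p n, hpstable n⟩ : {u : Conf s // Stable e s u}))
    have heqp : p n1 = p n2 := congrArg Subtype.val h
    rcases lt_or_gt_of_ne hne with hlt | hlt
    · exact ⟨n1, n2 - n1, by omega, by rw [show n1 + (n2 - n1) = n2 by omega, heqp]⟩
    · exact ⟨n2, n1 - n2, by omega, by rw [show n2 + (n1 - n2) = n1 by omega, ← heqp]⟩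
  have hperd : ∀ d, p (n + d + k) = p (n + d) := by
    intro d
    induction d with
    | zero => simpa using hper0
    | succ d ih =>
      rw [show n + (d + 1) + k = (n + d + k) + 1 by omega, hpS, ih, ← hpS]
      rfl
  have hmul : ∀ j t, n ≤ t → p (t + j * k) = p t := by
    intro j
    induction j with
    | zero => intro t _; simp
    | succ j ih =>
      intro t ht
      rw [show t + (j + 1) * k = (n + (t + j * k - n)) + k by ring_nf; omega, hperd,
        show n + (t + j * k - n) = t + j * k by omega, ih t ht]
  have hadd : ∀ i j, σ (p i + p j) = p (i + j + 1) := by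
    intro i
    induction i with
    | zero =>
      intro j
      rw [show (0 : ℕ) + j + 1 = j + 1 by omega, hpS]
      rfl
    | succ i ih =>
      intro j
      calc σ (p (i + 1) + p j) = σ (σ (a + p i) + p j) := by rw [hpS]
      _ = σ ((a + p i) + p j) := habs _ _
      _ = σ (a + (p i + p j)) := by rw [add_assoc]
      _ = σ (a + σ (p i + p j)) := (habs' _ _).symm
      _ = σ (a + p (i + j + 1)) := by rw [ih]
      _ = p ((i + j + 1) + 1) := (hpS _).symm
      _ = p ((i + 1) + j + 1) := by rw [show (i + j + 1) + 1 = (i + 1) + j + 1 by omega]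
  set t := (n + 1) * k - 1 with htdef
  have htk : t + 1 = (n + 1) * k := by
    have h1 : 1 * k ≤ (n + 1) * k := Nat.mul_le_mul_right k (by omega)
    omega
  have htn : n ≤ t := by
    have h2 : (n + 1) * 1 ≤ (n + 1) * k := Nat.mul_le_mul_left _ hk
    omega
  set eT := p t with heT
  have hidem : σ (eT + eT) = eT := by
    calc σ (p t + p t) = p (t + t + 1) := hadd t t
    _ = p (t + (n + 1) * k) := by rw [show t + t + 1 = t + (t + 1) by omega, htk]
    _ = p t := hmul (n + 1) t htn
  have heTrec : Recurrent e s σ eT := by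
    obtain ⟨x, hx⟩ := hprec t
    rw [heT, ← hx]
    exact hrecOf x
  refine ⟨fun u v _ _ => (hσ _).1, fun u v => by rw [add_comm], ?_, ?_, ?_, ⟨eT, heTrec, ?_, ?_⟩⟩
  · intro u v w
    calc σ (σ (u + v) + w) = σ ((u + v) + w) := habs _ _
    _ = σ ((v + w) + u) := by rw [show (u + v) + w = (v + w) + u by ring]
    _ = σ (σ (v + w) + u) := (habs _ _).symm
    _ = σ (u + σ (v + w)) := by rw [add_comm]
  · intro u hu
    rw [zero_add]
    exact sigma_stable_fix e s σ hσ u hu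
  · intro u v hu _
    obtain ⟨x, hx⟩ := hu.2 m
    have h1 : σ (u + v) = σ (m + (x + v)) := by
      rw [← hx, habs, add_assoc]
    rw [h1]
    exact hrecOf _
  · intro u hu
    obtain ⟨w, hw⟩ := hu.2 eT
    calc σ (eT + u) = σ (eT + σ (eT + w)) := by rw [hw]
    _ = σ (eT + (eT + w)) := habs' _ _
    _ = σ ((eT + eT) + w) := by rw [add_assoc]
    _ = σ (σ (eT + eT) + w) := (habs _ _).symm
    _ = σ (eT + w) := by rw [hidem]
    _ = u := hw
  · intro u hu
    obtain ⟨w, hw⟩ := heTrec.2 u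
    refine ⟨σ (eT + w), ?_, ?_⟩
    · obtain ⟨xe, hxe⟩ := hprec t
      have h1 : σ (eT + w) = σ (m + (xe + w)) := by
        rw [heT, ← hxe, habs, add_assoc]
      rw [h1]
      exact hrecOf _
    · calc σ (u + σ (eT + w)) = σ (u + (eT + w)) := habs' _ _
      _ = σ (σ (u + w) + eT) := by
          rw [show u + (eT + w) = (u + w) + eT by ring, ← habs (u + w) eT]
      _ = σ (eT + eT) := by rw [hw]
      _ = eT := hidem


end SandpilePaper
end

section
/- Let T be a thick tree with loops with sink s, and let Λ ⊆ ℤ^{V₀} be the lattice spanned by the rows of the toppling matrix Δ. Then Λ = { v ∈ ℤ^{V₀} : e_{j,p(j)} divides ∑_{i ⪰ j} v_i for all j ∈ V₀ }. -/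
namespace SimpleGraph

variable {α : Type*} {G : SimpleGraph α}

theorem Walk.dist_add_dist_le_length_of_mem_support {u v w : α} (W : G.Walk u w)
    (hv : v ∈ W.support) : G.dist u v + G.dist v w ≤ W.length := by
  classical
  rw [← W.take_spec hv, Walk.length_append]
  exact add_le_add (dist_le _) (dist_le _)

theorem IsTree.dist_eq_add_iff_of_adj (hG : G.IsTree) {u v w : α} (hadj : G.Adj v u)
    (hd : G.dist v w = G.dist u w + 1) (x : α) :
    G.dist v w = G.dist v x + G.dist x w ↔ v = x ∨ G.dist u w = G.dist u x + G.dist x w := by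
  have hconn := hG.connected
  have hvu : G.dist v u = 1 := dist_eq_one_iff_adj.2 hadj
  constructor
  · intro hx
    refine or_iff_not_imp_left.2 fun hvx => ?_
    obtain ⟨A, hA⟩ := hconn.exists_walk_length_eq_dist v x
    obtain ⟨B, hB⟩ := hconn.exists_walk_length_eq_dist x w
    obtain ⟨Q, hQ⟩ := hconn.exists_walk_length_eq_dist u w
    have hAB : (A.append B).length = G.dist v w := by rw [Walk.length_append, hA, hB, hx]
    have hQ' : (Walk.cons hadj Q).length = G.dist v w := by rw [Walk.length_cons, hQ, hd]
    -- in a tree the geodesic from `v` to `w` through `x` must be the one through `u`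
    have heq : A.append B = Walk.cons hadj Q :=
      (hG.existsUnique_path v w).unique (Walk.isPath_of_length_eq_dist _ hAB)
        (Walk.isPath_of_length_eq_dist _ hQ')
    have hxQ : x ∈ Q.support := by
      have hx' : x ∈ (A.append B).support :=
        (A.mem_support_append_iff B).2 (Or.inl A.end_mem_support)
      rw [heq, Walk.support_cons, List.mem_cons] at hx'
      exact hx'.resolve_left (Ne.symm hvx)
    have := Q.dist_add_dist_le_length_of_mem_support hxQ
    have := hconn.dist_triangle (u := u) (v := x) (w := w)
    omega
  · rintro (rfl | hx)
    · simp
    · have := hconn.dist_triangle (u := v) (v := x) (w := w)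
      have := hconn.dist_triangle (u := v) (v := u) (w := x)
      omega

end SimpleGraph

namespace SandpilePaper

section Tree

variable {V : Type*} {e : V → V → ℕ} {s : V} {p : {i : V // i ≠ s} → V}

theorem succeq_refl (x : V) : succeq e s x x := by
  simp [succeq]

theorem not_succeq_sink (hc : (graph e).Connected) {j : V} (hj : j ≠ s) : ¬ succeq e s s j := by
  have := hc.pos_dist_of_ne hj
  simp only [succeq, SimpleGraph.dist_self]
  omega

theorem dist_lt_of_succeq (hc : (graph e).Connected) {i j : V} (h : succeq e s i j)
    (hij : i ≠ j) : (graph e).dist j s < (graph e).dist i s := by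
  have := hc.pos_dist_of_ne hij
  unfold succeq at h
  omega

namespace IsParent

theorem succeq_iff (hp : IsParent e s p) (ht : (graph e).IsTree) (j : {i : V // i ≠ s}) (x : V) :
    succeq e s j x ↔ j.1 = x ∨ succeq e s (p j) x :=
  ht.dist_eq_add_iff_of_adj (hp j).1 (hp j).2.symm x

theorem not_succeq_parent (hp : IsParent e s p) (j : {i : V // i ≠ s}) :
    ¬ succeq e s (p j) j := by
  have := (hp j).2
  unfold succeq
  omega

theorem not_parent_eq_and_parent_eq (hp : IsParent e s p) (i j : {i : V // i ≠ s}) :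
    ¬ (p i = j.1 ∧ p j = i.1) := by
  rintro ⟨hi, hj⟩
  have hdi := (hp i).2
  have hdj := (hp j).2
  rw [hi] at hdi
  rw [hj] at hdj
  omega

theorem eq_of_adj (hp : IsParent e s p) (ht : (graph e).IsTree) (j : {i : V // i ≠ s}) {x : V}
    (hadj : (graph e).Adj j x) (hd : (graph e).dist x s + 1 = (graph e).dist j s) : x = p j := by
  have hjx : succeq e s j x := by
    rw [succeq, SimpleGraph.dist_eq_one_iff_adj.2 hadj]
    omega
  rcases (hp.succeq_iff ht j x).1 hjx with h | h
  · exact absurd h hadj.ne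
  · have := (hp j).2
    unfold succeq at h
    exact ((ht.connected.dist_eq_zero_iff).1 (by omega)).symm

theorem adj_cases (hp : IsParent e s p) (ht : (graph e).IsTree) {a b : V}
    (hadj : (graph e).Adj a b) :
    (∃ ha : a ≠ s, b = p ⟨a, ha⟩) ∨ ∃ hb : b ≠ s, a = p ⟨b, hb⟩ := by
  rcases ht.dist_eq_dist_add_one_of_adj s hadj with h | h <;>
    simp only [SimpleGraph.dist_comm (u := s)] at h
  · have ha : a ≠ s := by rintro rfl; simp at h
    exact Or.inl ⟨ha, hp.eq_of_adj ht ⟨a, ha⟩ hadj h.symm⟩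
  · have hb : b ≠ s := by rintro rfl; simp at h
    exact Or.inr ⟨hb, hp.eq_of_adj ht ⟨b, hb⟩ hadj.symm h.symm⟩

variable [DecidableEq V]

theorem ite_succeq_sub_ite_succeq_parent (hp : IsParent e s p) (ht : (graph e).IsTree)
    (j : {i : V // i ≠ s}) (x : V) :
    ((if succeq e s j x then 1 else 0) - if succeq e s (p j) x then 1 else 0 : ℤ) =
      if j.1 = x then 1 else 0 := by
  by_cases h : j.1 = x
  · subst h
    simp [succeq_refl, hp.not_succeq_parent j]
  · simp [hp.succeq_iff ht j x, h]

/-- Only the edge between `j` and its parent crosses the boundary of the subtree `{x | x ⪰ j}`. -/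
theorem ite_succeq_sub_mul_eq (hp : IsParent e s p) (ht : (graph e).IsTree)
    (i j : {i : V // i ≠ s}) (x : V) :
    ((if succeq e s i j then 1 else 0) - (if succeq e s x j then 1 else 0) : ℤ) * e i x =
      (if i = j ∧ x = p j then (e i x : ℤ) else 0) - if p j = i ∧ x = j then (e i x : ℤ) else 0 := by
  by_cases he : e i x = 0
  · simp [he]
  by_cases hx : x = i.1
  · subst hx
    have h1 : ¬ (i = j ∧ i.1 = p j) := by rintro ⟨rfl, h⟩; exact (hp i).1.ne h
    have h2 : ¬ (p j = i.1 ∧ i.1 = j.1) := fun h => (hp j).1.ne (h.2.symm.trans h.1.symm)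
    rw [sub_self, zero_mul, if_neg h1, if_neg h2, sub_zero]
  have hadj : (graph e).Adj i x := by
    rw [graph, SimpleGraph.fromRel_adj]
    exact ⟨Ne.symm hx, Or.inl (Nat.pos_of_ne_zero he)⟩
  rcases hp.adj_cases ht hadj with ⟨_, rfl⟩ | ⟨hx', hi⟩
  · have h2 : ¬ (p j = i.1 ∧ p i = j.1) := fun h => hp.not_parent_eq_and_parent_eq i j ⟨h.2, h.1⟩
    rw [hp.ite_succeq_sub_ite_succeq_parent ht i j, if_neg h2, sub_zero]
    rcases eq_or_ne i j with rfl | hij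
    · simp
    · simp [hij, Subtype.val_injective.ne hij]
  · have h1 : ¬ (i = j ∧ x = p j) := by
      rintro ⟨rfl, h⟩
      exact hp.not_parent_eq_and_parent_eq ⟨x, hx'⟩ i ⟨hi.symm, h.symm⟩
    rw [← neg_sub, hi, hp.ite_succeq_sub_ite_succeq_parent ht ⟨x, hx'⟩ j, if_neg h1, zero_sub]
    rcases eq_or_ne x j.1 with rfl | hxj
    · simp
    · simp [hxj]

end IsParent

end Tree

section Sums

variable {V : Type*} [Fintype V] [DecidableEq V] {e : V → V → ℕ} {s : V}
  {p : {i : V // i ≠ s} → V}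

theorem deltaRow_eq (i k : {i : V // i ≠ s}) :
    deltaRow e s i k = (if i.1 = k.1 then (deg e i : ℤ) else 0) - e i k := by
  by_cases h : i = k
  · subst h; simp [deltaRow]
  · simp [deltaRow, h, Subtype.val_injective.ne h]

theorem sum_descendants_deltaRow (hp : IsParent e s p) (ht : (graph e).IsTree)
    (i j : {i : V // i ≠ s}) :
    ∑ k ∈ descendants e s j, deltaRow e s i k =
      (if i = j then (e j (p j) : ℤ) else 0) - if p j = i then (e i j : ℤ) else 0 := by
  set χ : V → ℤ := fun x => if succeq e s x j then 1 else 0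
  calc ∑ k ∈ descendants e s j, deltaRow e s i k
      = ∑ x : V, χ x * ((if i.1 = x then (deg e i : ℤ) else 0) - e i x) := by
        rw [Fintype.sum_eq_add_sum_subtype_ne _ s, descendants, Finset.sum_filter]
        simp [χ, not_succeq_sink ht.connected j.2, deltaRow_eq]
    _ = ∑ x : V, (χ i - χ x) * e i x := by
        simp [mul_sub, Finset.sum_sub_distrib, deg, Finset.mul_sum, sub_mul]
    _ = ∑ x, ((if i = j ∧ x = p j then (e i x : ℤ) else 0) -
          if p j = i ∧ x = j then (e i x : ℤ) else 0) :=
        Finset.sum_congr rfl fun x _ => hp.ite_succeq_sub_mul_eq ht i j x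
    _ = _ := by
        rcases eq_or_ne i j with rfl | hij <;> simp [Finset.sum_sub_distrib, ite_and, *]

noncomputable def subtreeSum (e : V → V → ℕ) (s : V) :
    ({i : V // i ≠ s} → ℤ) →+ ({i : V // i ≠ s} → ℤ) where
  toFun u j := ∑ i ∈ descendants e s j, u i
  map_zero' := by ext; simp
  map_add' u v := by ext; simp [Finset.sum_add_distrib]

theorem subtreeSum_apply (u : {i : V // i ≠ s} → ℤ) (j : {i : V // i ≠ s}) :
    subtreeSum e s u j = ∑ i ∈ descendants e s j, u i :=
  rfl

theorem sum_descendants_ite_val_eq (hc : (graph e).Connected) (x : V) (c : ℤ)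
    (j : {i : V // i ≠ s}) :
    ∑ i ∈ descendants e s j, (if x = i.1 then c else 0) = if succeq e s x j then c else 0 := by
  by_cases hx : x = s
  · subst hx
    simp [not_succeq_sink hc j.2, eq_comm (a := x), fun i : {i : V // i ≠ x} => i.2]
  · simp_rw [show ∀ i : {i : V // i ≠ s}, x = i.1 ↔ ⟨x, hx⟩ = i from fun i => by rw [Subtype.ext_iff]]
    simp [Finset.sum_ite_eq, descendants]

theorem subtreeSum_sum_deltaRow (hsym : ∀ i j : V, e i j = e j i) (hp : IsParent e s p)
    (ht : (graph e).IsTree) (j : {i : V // i ≠ s}) :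
    subtreeSum e s (∑ i ∈ descendants e s j, deltaRow e s i) = Pi.single j (e j (p j) : ℤ) := by
  ext k
  have hflow : ∀ i : {i : V // i ≠ s},
      (if p k = i.1 then (e i k : ℤ) else 0) = if p k = i.1 then (e k (p k) : ℤ) else 0 := by
    intro i
    split_ifs with h
    · rw [← h, hsym]
    · rfl
  rw [map_sum, Finset.sum_apply]
  simp only [subtreeSum_apply, sum_descendants_deltaRow hp ht, hflow]
  rw [Finset.sum_sub_distrib, Finset.sum_ite_eq', sum_descendants_ite_val_eq ht.connected]
  simp only [descendants, Finset.mem_filter, Finset.mem_univ, true_and]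
  rw [← boole_mul (succeq e s k j), ← boole_mul (succeq e s (p k) j), ← sub_mul,
    hp.ite_succeq_sub_ite_succeq_parent ht, boole_mul, Pi.single_apply]
  rcases eq_or_ne k j with rfl | hkj
  · simp
  · simp [hkj, Subtype.val_injective.ne hkj]

theorem subtreeSum_injective (hc : (graph e).Connected) : Function.Injective (subtreeSum e s) := by
  rw [injective_iff_map_eq_zero]
  intro u hu
  by_contra hne
  have hsupp : Finset.Nonempty (Finset.univ.filter fun i => u i ≠ 0) := by
    obtain ⟨j, hj⟩ := Function.ne_iff.1 hne
    exact ⟨j, by simpa using hj⟩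
  -- a vertex of maximal depth in the support of `u` sees no other support vertex above it
  obtain ⟨j, hj, hmax⟩ := Finset.exists_max_image _ (fun i => (graph e).dist i.1 s) hsupp
  have hsum : subtreeSum e s u j = u j := by
    refine Finset.sum_eq_single_of_mem j (by simp [descendants, succeq_refl]) fun i hi hij => ?_
    by_contra hi0
    have := hmax i (by simpa using hi0)
    have := dist_lt_of_succeq hc (Finset.mem_filter.1 hi).2 (Subtype.val_injective.ne hij)
    omega
  rw [hu, Pi.zero_apply] at hsum
  exact (Finset.mem_filter.1 hj).2 hsum.symm

theorem lattice_eq_comap_subtreeSum (hsym : ∀ i j : V, e i j = e j i) (hp : IsParent e s p)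
    (ht : (graph e).IsTree) :
    lattice e s = (AddSubgroup.pi Set.univ fun j : {i : V // i ≠ s} =>
      AddSubgroup.zmultiples (e j (p j) : ℤ)).comap (subtreeSum e s) := by
  apply le_antisymm
  · rw [lattice, AddSubgroup.closure_le]
    rintro _ ⟨i, rfl⟩
    rw [SetLike.mem_coe, AddSubgroup.mem_comap, AddSubgroup.mem_pi]
    intro j _
    rw [Int.mem_zmultiples_iff, subtreeSum_apply, sum_descendants_deltaRow hp ht]
    refine dvd_sub ?_ ?_ <;> split_ifs with h
    · exact dvd_rfl
    · exact dvd_zero _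
    · rw [← h, hsym]
    · exact dvd_zero _
  · intro v hv
    choose q hq using fun j => Int.mem_zmultiples_iff.1 (hv j trivial)
    have hv_eq : v = ∑ j, q j • ∑ i ∈ descendants e s j, deltaRow e s i := by
      refine subtreeSum_injective ht.connected ?_
      ext k
      rw [map_sum, Finset.sum_apply]
      simp only [map_zsmul, subtreeSum_sum_deltaRow hsym hp ht, Pi.smul_apply, Pi.single_apply,
        smul_eq_mul]
      rw [hq k]
      simp [mul_comm]
    rw [hv_eq]
    exact AddSubgroup.sum_mem _ fun j _ => AddSubgroup.zsmul_mem _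
      (AddSubgroup.sum_mem _ fun i _ => AddSubgroup.subset_closure (Set.mem_range_self i)) _

end Sums

variable {V : Type*} [Fintype V] [DecidableEq V]

theorem stmt_10 (e : V → V → ℕ) (s : V) (hsym : ∀ i j : V, e i j = e j i)
    (htree : (graph e).IsTree)
    (p : {i : V // i ≠ s} → V) (hp : IsParent e s p)
    (v : {i : V // i ≠ s} → ℤ) :
    v ∈ lattice e s ↔
      ∀ j : {i : V // i ≠ s}, (e j.1 (p j) : ℤ) ∣ ∑ i ∈ descendants e s j, v i := by
  rw [lattice_eq_comap_subtreeSum hsym hp htree, AddSubgroup.mem_comap, AddSubgroup.mem_pi]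
  simp only [Set.mem_univ, forall_const, Int.mem_zmultiples_iff, subtreeSum_apply]

end SandpilePaper
end
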